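/- Let $W$ be the Weyl group of a root system $\Phi$ in Euclidean space $E$, acting by reflections $s_\alpha(\beta) = \beta - \langle \beta, \alpha^\vee \rangle \alpha$. Let $\mathfrak{h}_1 \subset \mathfrak{h}_2$ correspond to a linear surjection $\pi : \mathfrak{h}_2^* \to \mathfrak{h}_1^*$, and let $\Phi_1^* \subset \Phi_2$ be the set of roots $\alpha^*$ extending roots $\alpha \in \Phi_1$, satisfying $\pi(s_{\alpha^*}(\beta^*)) = s_\alpha(\beta)$ for all $\alpha, \beta \in \Phi_1$. Then the reflection $s_{\alpha^*}$ maps $\Phi_1^*$ to itself. -/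

import Mathlib

open RealInnerProductSpace

theorem mem_image_of_mem_of_unique_lift {X Y : Type*} {p : Y → X} {s : Set X} {t : Set Y}
    {lift : X → Y} (huniq : ∀ x ∈ s, ∀ y ∈ t, p y = x → y = lift x)
    {y : Y} (hy : y ∈ t) (hpy : p y ∈ s) : y ∈ lift '' s :=
  ⟨p y, hpy, (huniq _ hpy y hy rfl).symm⟩

/-- Let `Φ₂` be a root system in a Euclidean space `E₂`, with reflections
`s_a(v) = v - ⟪v, a^∨⟫ a`, and let `π : E₂ → E₁` correspond to an inclusion
`h₁ ⊆ h₂` of Cartan subalgebras.  Let `Φ₁* ⊆ Φ₂` be the set of roots `α*` extending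
the roots `α` of a root system `Φ₁` in `E₁` (the unique extensions), satisfying the
intertwining relation `π(s_{α*}(β*)) = s_α(β)`.  Then for `α ∈ Φ₁`, the reflection
`s_{α*}` maps `Φ₁*` to itself. -/
theorem reflection_maps_extended_roots_to_themselves
    (E1 E2 : Type*) [NormedAddCommGroup E1] [InnerProductSpace ℝ E1]
    [NormedAddCommGroup E2] [InnerProductSpace ℝ E2]
    (π : E2 →ₗ[ℝ] E1)
    (Φ1 : Set E1) (Φ2 : Set E2)
    -- root system axiom for `Φ₂`: reflections in roots preserve `Φ₂`
    (hΦ2refl : ∀ a ∈ Φ2, ∀ b ∈ Φ2,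
      b - (2 * ⟪b, a⟫ / ⟪a, a⟫) • a ∈ Φ2)
    -- the Weyl group of `Φ₁` preserves `Φ₁`; `s₁ a` denotes `s_α` applied to `a`
    (s1 : E1 → E1) (hs1 : ∀ b ∈ Φ1, s1 b ∈ Φ1)
    -- the star map: unique extension of roots of `Φ₁` to roots of `Φ₂`
    (star : E1 → E2)
    (hstar : ∀ b ∈ Φ1, star b ∈ Φ2 ∧ π (star b) = b)
    (huniq : ∀ b ∈ Φ1, ∀ c ∈ Φ2, π c = b → c = star b)
    (α : E1) (hα : α ∈ Φ1)
    -- the intertwining relation `π(s_{α*}(β*)) = s_α(β)` for all `β ∈ Φ₁`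
    (hintertwine : ∀ β ∈ Φ1,
      π (star β - (2 * ⟪star β, star α⟫ / ⟪star α, star α⟫) • star α) = s1 β) :
    ∀ β ∈ Φ1,
      star β - (2 * ⟪star β, star α⟫ / ⟪star α, star α⟫) • star α ∈ star '' Φ1 := by
  intro β hβ
  have hroot := hΦ2refl (star α) (hstar α hα).1 (star β) (hstar β hβ).1
  have hproj : π (star β - (2 * ⟪star β, star α⟫ / ⟪star α, star α⟫) • star α) ∈ Φ1 :=
    hintertwine β hβ ▸ hs1 β hβ
  exact mem_image_of_mem_of_unique_lift huniq hroot hproj
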